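/- Recursion (L1): for every σ ∈ {0,1,…,r}^N, 𝐟(σ·0) = (t^l + a)·𝐟(σ), where l = #{i : σ_i < r} and σ·0 denotes σ with the entry 0 appended. -/

import Mathlib

open MvPolynomial

noncomputable section

/-- The field `F = ℚ(q,a,t)` of rational functions in three variables over `ℚ`. -/
abbrev KRF : Type := FractionRing (MvPolynomial (Fin 3) ℚ)

/-- The variable `q` in `F`. -/
def fq : KRF := algebraMap (MvPolynomial (Fin 3) ℚ) KRF (X 0)
/-- The variable `a` in `F`. -/
def fa : KRF := algebraMap (MvPolynomial (Fin 3) ℚ) KRF (X 1)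
/-- The variable `t` in `F`. -/
def ft : KRF := algebraMap (MvPolynomial (Fin 3) ℚ) KRF (X 2)

/-- The number `|v|` of ones in a binary sequence. -/
def onesCt (v : List Bool) : ℕ := v.count true

/-- A p-family: a function on (balanced) pairs of binary sequences with values in
`F = ℚ(q,a,t)` satisfying the five recursion rules (1)-(5). -/
def IsPFamily (p : List Bool → List Bool → KRF) : Prop :=
  (∀ n : ℕ, p [] (List.replicate n false) = ((1 + fa) / (1 - fq)) ^ n) ∧
  (∀ m : ℕ, p (List.replicate m false) [] = ((1 + fa) / (1 - fq)) ^ m) ∧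
  (∀ v w : List Bool, onesCt v = onesCt w →
      p (v ++ [true]) (w ++ [true]) = (ft ^ onesCt v + fa) * p v w) ∧
  (∀ v w : List Bool, onesCt v = onesCt w + 1 →
      p (v ++ [false]) (w ++ [true]) = p v (true :: w)) ∧
  (∀ v w : List Bool, onesCt v + 1 = onesCt w →
      p (v ++ [true]) (w ++ [false]) = p (true :: v) w) ∧
  (∀ v w : List Bool, onesCt v = onesCt w →
      p (v ++ [false]) (w ++ [false]) =
        ft ^ (-(onesCt v : ℤ)) * p (true :: v) (true :: w) +
          fq * ft ^ (-(onesCt v : ℤ)) * p (false :: v) (false :: w))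

/-- The symbols `1`, `0`, `∗` used in fillings. -/
inductive Symb : Type
  | one : Symb
  | zero : Symb
  | star : Symb
deriving DecidableEq

/-- An admissible filling of the `r × N` grid (rows indexed top-to-bottom by `Fin r`,
columns left-to-right by `Fin N`): every row and every column contains at most one `1`,
every cell strictly below a `1` in the same column is `∗`, and every other cell is `0`
(i.e. every `∗` lies strictly below a `1` in its column). -/
def IsAdmissible {r N : ℕ} (T : Fin r → Fin N → Symb) : Prop :=
  (∀ (i : Fin r) (j j' : Fin N), T i j = Symb.one → T i j' = Symb.one → j = j') ∧
  (∀ (j : Fin N) (i i' : Fin r), T i j = Symb.one → T i' j = Symb.one → i = i') ∧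
  (∀ (i i' : Fin r) (j : Fin N), T i j = Symb.one → i < i' → T i' j = Symb.star) ∧
  (∀ (i : Fin r) (j : Fin N), T i j = Symb.star → ∃ i' : Fin r, i' < i ∧ T i' j = Symb.one)

/-- `σ(T)_j`: the number of cells labeled `0` in the `j`-th column of `T`. -/
def colZeros {r N : ℕ} (T : Fin r → Fin N → Symb) (j : Fin N) : ℕ :=
  (Finset.univ.filter (fun i => T i j = Symb.zero)).card

/-- `v(T)_j = 1` iff the `j`-th column of `T` is occupied (contains a `1`). -/
def vFun {r N : ℕ} (T : Fin r → Fin N → Symb) (j : Fin N) : Bool :=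
  decide (∃ i : Fin r, T i j = Symb.one)

/-- The binary sequence `v(T)` as a list. -/
def vList {r N : ℕ} (T : Fin r → Fin N → Symb) : List Bool :=
  (List.finRange N).map (vFun T)

/-- The binary sequence `w(T)`: read the entries of `T` from left to right along each row,
taking the rows from bottom to top, skipping all cells labeled `∗` (with `1 ↦ true`,
`0 ↦ false`). -/
def wList {r N : ℕ} (T : Fin r → Fin N → Symb) : List Bool :=
  ((List.finRange r).reverse.map (fun i =>
    (List.finRange N).filterMap (fun j =>
      match T i j with
      | Symb.one => some true
      | Symb.zero => some false
      | Symb.star => none))).flatten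

/-! An admissible filling is determined by its column zero counts: a column with `k < r` zeros
reads `k` zeros, a `1`, then `∗`s. Appending `0` to `σ` therefore appends a column whose only
non-`∗` cell is a `1` in the top row, so both `v` and `w` gain a final `1`. Since every column
holds at most one `1`, the pair `(v(σ), w(σ))` is balanced with `|v(σ)| = #{i : σ_i < r}`, and
rule (2) produces the factor `t^l + a`. -/

def canonCol (r k : ℕ) (i : Fin r) : Symb :=
  if (i : ℕ) < k then Symb.zero else if (i : ℕ) = k then Symb.one else Symb.star

lemma canonCol_eq_one_iff {r k : ℕ} (i : Fin r) : canonCol r k i = Symb.one ↔ (i : ℕ) = k := by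
  unfold canonCol; split_ifs <;> simp <;> omega

lemma exists_canonCol_eq_one_iff {r k : ℕ} : (∃ i, canonCol r k i = Symb.one) ↔ k < r := by
  simp only [canonCol_eq_one_iff]
  exact ⟨fun ⟨i, hi⟩ => hi ▸ i.isLt, fun hk => ⟨⟨k, hk⟩, rfl⟩⟩

namespace IsAdmissible

variable {r N : ℕ} {T : Fin r → Fin N → Symb}

lemma eq_zero_of_lt_of_eq_one (hT : IsAdmissible T) {i i₀ : Fin r} {j : Fin N}
    (hi : i < i₀) (h₀ : T i₀ j = Symb.one) : T i j = Symb.zero := by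
  cases h : T i j with
  | zero => rfl
  | one => exact absurd (hT.2.1 j i i₀ h h₀) hi.ne
  | star =>
    obtain ⟨i', hi', h'⟩ := hT.2.2.2 i j h
    exact absurd (hT.2.1 j i' i₀ h' h₀ ▸ hi'.trans hi) (lt_irrefl _)

lemma eq_zero_of_forall_ne_one (hT : IsAdmissible T) {j : Fin N}
    (hj : ∀ i, T i j ≠ Symb.one) (i : Fin r) : T i j = Symb.zero := by
  cases h : T i j with
  | zero => rfl
  | one => exact absurd h (hj i)
  | star =>
    obtain ⟨i', -, h'⟩ := hT.2.2.2 i j h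
    exact absurd h' (hj i')

theorem eq_canonCol (hT : IsAdmissible T) (i : Fin r) (j : Fin N) :
    T i j = canonCol r (colZeros T j) i := by
  by_cases hone : ∃ i₀, T i₀ j = Symb.one
  · obtain ⟨i₀, h₀⟩ := hone
    have hcol : ∀ i, T i j = canonCol r i₀ i := by
      intro i
      rcases lt_trichotomy i i₀ with h | rfl | h
      · rw [hT.eq_zero_of_lt_of_eq_one h h₀, canonCol, if_pos (Fin.lt_def.mp h)]
      · rw [h₀, (canonCol_eq_one_iff i).mpr rfl]
      · rw [hT.2.2.1 i₀ i j h₀ h, canonCol, if_neg (by omega), if_neg (by omega)]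
    have hzeros : colZeros T j = i₀ := by
      have : Finset.univ.filter (fun i => T i j = Symb.zero) = Finset.Iio i₀ := by
        ext i
        simp only [Finset.mem_filter, Finset.mem_univ, true_and, Finset.mem_Iio, hcol i,
          canonCol, Fin.lt_def]
        split_ifs <;> simp_all
      rw [colZeros, this, Fin.card_Iio]
    rw [hzeros, hcol i]
  · push Not at hone
    have hzeros : colZeros T j = r := by
      simp [colZeros, hT.eq_zero_of_forall_ne_one hone]
    rw [hzeros, hT.eq_zero_of_forall_ne_one hone, canonCol, if_pos i.isLt]

end IsAdmissible

def Symb.read : Symb → Option Bool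
  | Symb.one => some true
  | Symb.zero => some false
  | Symb.star => none

def wRow {r N : ℕ} (T : Fin r → Fin N → Symb) (i : Fin r) : List Bool :=
  (List.finRange N).filterMap fun j => (T i j).read

lemma wList_eq_flatten_wRow {r N : ℕ} (T : Fin r → Fin N → Symb) :
    wList T = ((List.finRange r).reverse.map (wRow T)).flatten := rfl

lemma card_filter_univ_eq_countP_finRange {N : ℕ} (q : Fin N → Prop) [DecidablePred q] :
    (Finset.univ.filter q).card = (List.finRange N).countP (fun j => decide (q j)) := by
  rw [Fin.univ_def]
  simp [Finset.filter, Finset.card, List.countP_eq_length_filter]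

lemma onesCt_vList {r N : ℕ} (T : Fin r → Fin N → Symb) :
    onesCt (vList T) = (Finset.univ.filter fun j => ∃ i, T i j = Symb.one).card := by
  rw [card_filter_univ_eq_countP_finRange, onesCt, vList, List.count_eq_countP, List.countP_map]
  exact List.countP_congr fun j _ => by simp [vFun]

lemma onesCt_wRow {r N : ℕ} (T : Fin r → Fin N → Symb) (i : Fin r) :
    onesCt (wRow T i) = (Finset.univ.filter fun j => T i j = Symb.one).card := by
  rw [card_filter_univ_eq_countP_finRange, onesCt, wRow, List.count_eq_countP,
    List.countP_filterMap]
  exact List.countP_congr fun j _ => by cases T i j <;> simp [Symb.read]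

lemma onesCt_wList {r N : ℕ} (T : Fin r → Fin N → Symb) :
    onesCt (wList T) = ∑ i, (Finset.univ.filter fun j => T i j = Symb.one).card := by
  rw [wList_eq_flatten_wRow, onesCt, List.count_flatten, List.map_map, List.map_reverse,
    List.sum_reverse, Fin.sum_univ_def]
  exact congrArg List.sum (List.map_congr_left fun i _ => onesCt_wRow T i)

/-- Since each column holds at most one `1`, both `v(T)` and `w(T)` count the `1`s of `T`. -/
theorem IsAdmissible.onesCt_vList_eq_onesCt_wList {r N : ℕ} {T : Fin r → Fin N → Symb}
    (hT : IsAdmissible T) : onesCt (vList T) = onesCt (wList T) := by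
  have hdisj : ((Finset.univ : Finset (Fin r)) : Set (Fin r)).PairwiseDisjoint
      fun i => Finset.univ.filter fun j => T i j = Symb.one := by
    intro i _ i' _ hne
    simp only [Function.onFun, Finset.disjoint_filter]
    exact fun j _ h h' => hne (hT.2.1 j i i' h h')
  rw [onesCt_vList, onesCt_wList, ← Finset.card_biUnion hdisj]
  congr 1
  ext j
  simp

section AppendColumn

variable {r N : ℕ} {T : Fin r → Fin N → Symb} {T₀ : Fin r → Fin (N + 1) → Symb}

lemma vList_eq_append_true (hcast : ∀ i j, T₀ i j.castSucc = T i j)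
    (hlast : ∃ i, T₀ i (Fin.last N) = Symb.one) : vList T₀ = vList T ++ [true] := by
  simp only [vList, List.finRange_succ_last, List.map_append, List.map_map, List.map_cons,
    List.map_nil]
  congr 1
  · exact List.map_congr_left fun j _ => by simp [vFun, hcast]
  · simpa [vFun] using hlast

lemma wRow_eq_append (hcast : ∀ i j, T₀ i j.castSucc = T i j) (i : Fin r) :
    wRow T₀ i = wRow T i ++ (T₀ i (Fin.last N)).read.toList := by
  rw [wRow, List.finRange_succ_last, List.filterMap_append, List.filterMap_map]
  congr 1
  exact List.filterMap_congr fun j _ => by simp [hcast]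

/-- The only `1` of the new column lies in the top row, which is read last. -/
lemma wList_eq_append_true {m : ℕ} {T : Fin (m + 1) → Fin N → Symb}
    {T₀ : Fin (m + 1) → Fin (N + 1) → Symb} (hcast : ∀ i j, T₀ i j.castSucc = T i j)
    (hlast : ∀ i, T₀ i (Fin.last N) = canonCol (m + 1) 0 i) :
    wList T₀ = wList T ++ [true] := by
  have hrow : ∀ i : Fin m, wRow T₀ i.succ = wRow T i.succ := fun i => by
    simp [wRow_eq_append hcast, hlast, canonCol, Symb.read]
  have hrow0 : wRow T₀ 0 = wRow T 0 ++ [true] := by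
    simp [wRow_eq_append hcast, hlast, canonCol, Symb.read]
  simp only [wList_eq_flatten_wRow, List.finRange_succ, List.reverse_cons, List.map_append,
    List.map_reverse, List.map_map, List.flatten_append, List.map_cons, List.map_nil,
    List.flatten_cons, List.flatten_nil, List.append_nil, hrow0, List.append_assoc]
  congr 3
  exact List.map_congr_left fun i _ => hrow i

end AppendColumn

theorem f_recursion_L1_general (p : List Bool → List Bool → KRF) (hp : IsPFamily p)
    (r : ℕ) (hr : 1 ≤ r) (N : ℕ) (σ : Fin N → ℕ)
    (T : Fin r → Fin N → Symb) (hT : IsAdmissible T)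
    (hTσ : ∀ j, colZeros T j = σ j)
    (T0 : Fin r → Fin (N + 1) → Symb) (hT0 : IsAdmissible T0)
    (hT0σ : ∀ j, colZeros T0 j = (Fin.snoc σ 0 : Fin (N + 1) → ℕ) j) :
    p (vList T0) (wList T0) =
      (ft ^ ((Finset.univ.filter (fun i => σ i < r)).card) + fa) *
        p (vList T) (wList T) := by
  obtain ⟨m, rfl⟩ : ∃ m, r = m + 1 := ⟨r - 1, by omega⟩
  have hcast : ∀ i j, T0 i j.castSucc = T i j := fun i j => by
    rw [hT0.eq_canonCol, hT.eq_canonCol, hT0σ, hTσ, Fin.snoc_castSucc]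
  have hlast : ∀ i, T0 i (Fin.last N) = canonCol (m + 1) 0 i := fun i => by
    rw [hT0.eq_canonCol, hT0σ, Fin.snoc_last]
  have hones : onesCt (vList T) = (Finset.univ.filter fun j => σ j < m + 1).card := by
    simp only [onesCt_vList, hT.eq_canonCol _, hTσ, exists_canonCol_eq_one_iff]
  have htop : T0 0 (Fin.last N) = Symb.one := (hlast 0).trans ((canonCol_eq_one_iff 0).mpr rfl)
  obtain ⟨-, -, rule2, -⟩ := hp
  rw [vList_eq_append_true hcast ⟨0, htop⟩, wList_eq_append_true hcast hlast,
    rule2 _ _ hT.onesCt_vList_eq_onesCt_wList, hones]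

/-- Recursion (L1): `𝐟(σ·0) = (t^l + a)·𝐟(σ)` where `l = #{i : σ_i < r}`.
Here `𝐟(σ) = p(v(σ), w(σ))`, with `T` (resp. `T0`) the unique admissible filling whose
column-zero-counts are `σ` (resp. `σ·0`, i.e. `Fin.snoc σ 0`). -/
theorem f_recursion_L1 (p : List Bool → List Bool → KRF) (hp : IsPFamily p)
    (r : ℕ) (hr : 1 ≤ r) (N : ℕ) (σ : Fin N → ℕ) (hσ : ∀ i, σ i ≤ r)
    (T : Fin r → Fin N → Symb) (hT : IsAdmissible T)
    (hTσ : ∀ j, colZeros T j = σ j)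
    (T0 : Fin r → Fin (N + 1) → Symb) (hT0 : IsAdmissible T0)
    (hT0σ : ∀ j, colZeros T0 j = (Fin.snoc σ 0 : Fin (N + 1) → ℕ) j) :
    p (vList T0) (wList T0) =
      (ft ^ ((Finset.univ.filter (fun i => σ i < r)).card) + fa) *
        p (vList T) (wList T) :=
  f_recursion_L1_general p hp r hr N σ T hT hTσ T0 hT0 hT0σ
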